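/- Equality case of the anisotropic conformable Picone identity: let α ∈ (0,1], let Ω ⊆ (0,∞)^n be open and connected, let p_k > 1 for k = 1,…,n, and let u, v : Ω → ℝ be continuously differentiable with u ≥ 0 and v > 0 on Ω. If L(u,v)(x) = 0 for every x ∈ Ω, then there exists a constant c ≥ 0 such that u = c·v on Ω. -/

import Mathlib

/-!
With `w = u / v`, the `k`-th summand of `L(u,v)` splits as the gap between `s ↦ s ^ p_k` and its
tangent line at `w |D^α_{x_k} v|`, evaluated at `|D^α_{x_k} u|`, plus a nonnegative multiple of
`|D^α_{x_k} u| |D^α_{x_k} v| - D^α_{x_k} u D^α_{x_k} v`. So `L ≥ 0`, and by strict convexity of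
`s ↦ s ^ p_k` the equality `L = 0` forces `D^α_{x_k} u = w D^α_{x_k} v` for every `k`. As
`x_k ^ (1 - α) > 0`, this says `∇u = w ∇v`, i.e. `∇(u / v) = 0`, so `u / v` is constant on the
connected open set `Ω`.
-/

open Filter Topology

/-- The conformable partial derivative of order `α` in the `k`-th coordinate:
`D^α_{x_k} f (x) = x_k^{1-α} ∂f/∂x_k (x)`. -/
noncomputable def confPDeriv (α : ℝ) {n : ℕ} (f : (Fin n → ℝ) → ℝ) (k : Fin n)
    (x : Fin n → ℝ) : ℝ :=
  (x k) ^ (1 - α) * deriv (fun t : ℝ => f (Function.update x k t)) (x k)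

/-- The second form `L(u,v)` of the anisotropic conformable Picone identity. -/
noncomputable def piconeL (α : ℝ) {n : ℕ} (p : Fin n → ℝ)
    (u v : (Fin n → ℝ) → ℝ) (x : Fin n → ℝ) : ℝ :=
  (∑ k, |confPDeriv α u k x| ^ (p k))
    + (∑ k, (p k - 1) * (u x / v x) ^ (p k) * |confPDeriv α v k x| ^ (p k))
    - ∑ k, p k * (u x / v x) ^ (p k - 1) * |confPDeriv α v k x| ^ (p k - 2)
        * confPDeriv α u k x * confPDeriv α v k x

open Real

section Tangent

variable {p s t : ℝ}

theorem rpow_tangent_lt (hp : 1 < p) (hs : 0 ≤ s) (ht : 0 ≤ t) (hst : s ≠ t) :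
    t ^ p + p * t ^ (p - 1) * (s - t) < s ^ p := by
  rcases ht.eq_or_lt with rfl | ht
  · rw [zero_rpow (by linarith), zero_rpow (by linarith)]
    simpa using rpow_pos_of_pos (hs.lt_of_ne hst.symm) p
  have hr : s / t - 1 ≠ 0 := sub_ne_zero.2 fun h => hst ((div_eq_one_iff_eq ht.ne').1 h)
  have hbern := one_add_mul_self_lt_rpow_one_add (by linarith [div_nonneg hs ht.le]) hr hp
  rw [add_sub_cancel, div_rpow hs ht.le, lt_div_iff₀ (rpow_pos_of_pos ht p)] at hbern
  have htp : t ^ p = t ^ (p - 1) * t := by rw [rpow_sub_one ht.ne', div_mul_cancel₀ _ ht.ne']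
  calc t ^ p + p * t ^ (p - 1) * (s - t) = (1 + p * (s / t - 1)) * t ^ p := by
        rw [htp]; field_simp
    _ < s ^ p := hbern

theorem rpow_tangent_le (hp : 1 < p) (hs : 0 ≤ s) (ht : 0 ≤ t) :
    t ^ p + p * t ^ (p - 1) * (s - t) ≤ s ^ p := by
  rcases eq_or_ne s t with rfl | hst
  · simp
  · exact (rpow_tangent_lt hp hs ht hst).le

theorem eq_of_rpow_tangent_eq (hp : 1 < p) (hs : 0 ≤ s) (ht : 0 ≤ t)
    (h : t ^ p + p * t ^ (p - 1) * (s - t) = s ^ p) : s = t := by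
  by_contra hst
  exact (rpow_tangent_lt hp hs ht hst).ne h

end Tangent

/-- The `k`-th summand of `L(u,v)`, with `w = u / v`, `A = D^α_{x_k} u` and `B = D^α_{x_k} v`. -/
noncomputable def piconeTerm (p w A B : ℝ) : ℝ :=
  |A| ^ p + (p - 1) * w ^ p * |B| ^ p - p * w ^ (p - 1) * |B| ^ (p - 2) * A * B

section PiconeTerm

variable {p w A B : ℝ}

theorem piconeTerm_eq_tangent_gap_add (hp : 1 < p) (hw : 0 ≤ w) :
    piconeTerm p w A B
      = (|A| ^ p - ((w * |B|) ^ p + p * (w * |B|) ^ (p - 1) * (|A| - w * |B|)))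
        + p * w ^ (p - 1) * |B| ^ (p - 2) * (|A| * |B| - A * B) := by
  have hB : |B| ^ (p - 1) = |B| ^ (p - 2) * |B| := by
    rw [← rpow_add_one' (abs_nonneg B) (by linarith)]; ring_nf
  have hwp : w ^ p = w ^ (p - 1) * w := by
    rw [← rpow_add_one' hw (by linarith)]; ring_nf
  rw [piconeTerm, mul_rpow hw (abs_nonneg B), mul_rpow hw (abs_nonneg B), hB, hwp,
    show |B| ^ p = |B| ^ (p - 2) * |B| * |B| by
      rw [← hB, ← rpow_add_one' (abs_nonneg B) (by linarith)]; ring_nf]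
  ring

theorem piconeTerm_nonneg (hp : 1 < p) (hw : 0 ≤ w) : 0 ≤ piconeTerm p w A B := by
  rw [piconeTerm_eq_tangent_gap_add hp hw]
  have hgap := rpow_tangent_le hp (abs_nonneg A) (mul_nonneg hw (abs_nonneg B))
  have hcross : 0 ≤ |A| * |B| - A * B := sub_nonneg.2 (abs_mul A B ▸ le_abs_self _)
  have := mul_nonneg (by positivity : 0 ≤ p * w ^ (p - 1) * |B| ^ (p - 2)) hcross
  linarith

theorem eq_mul_of_piconeTerm_eq_zero (hp : 1 < p) (hw : 0 ≤ w) (h : piconeTerm p w A B = 0) :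
    A = w * B := by
  rw [piconeTerm_eq_tangent_gap_add hp hw] at h
  have hgap := rpow_tangent_le hp (abs_nonneg A) (mul_nonneg hw (abs_nonneg B))
  have hcross : 0 ≤ |A| * |B| - A * B := sub_nonneg.2 (abs_mul A B ▸ le_abs_self _)
  have hcoef : 0 ≤ p * w ^ (p - 1) * |B| ^ (p - 2) := by positivity
  have habs : |A| = w * |B| :=
    eq_of_rpow_tangent_eq hp (abs_nonneg A) (mul_nonneg hw (abs_nonneg B))
      (by nlinarith [mul_nonneg hcoef hcross])
  suffices w * B = 0 ∨ A * B = w * B * B by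
    rcases this with hwB | hAB
    · rw [← abs_of_nonneg hw, ← abs_mul, hwB, abs_zero, abs_eq_zero] at habs
      rw [habs, hwB]
    · rcases eq_or_ne B 0 with rfl | hB
      · simpa using habs
      · exact mul_right_cancel₀ hB hAB
  rcases (mul_eq_zero.1 (by nlinarith [mul_nonneg hcoef hcross] :
      p * w ^ (p - 1) * |B| ^ (p - 2) * (|A| * |B| - A * B) = 0)) with hcoef0 | hcross0
  · rw [mul_eq_zero, mul_eq_zero, rpow_eq_zero_iff_of_nonneg hw,
      rpow_eq_zero_iff_of_nonneg (abs_nonneg B), abs_eq_zero] at hcoef0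
    rcases hcoef0 with (hp0 | ⟨rfl, -⟩) | ⟨rfl, -⟩
    · linarith
    all_goals simp
  · right
    rw [mul_assoc, ← abs_mul_abs_self B, ← mul_assoc, ← habs]
    linarith

end PiconeTerm

section Calculus

variable {𝕜 ι E F : Type*} [NontriviallyNormedField 𝕜] [Fintype ι] [DecidableEq ι]
  [NormedAddCommGroup E] [NormedSpace 𝕜 E] [NormedAddCommGroup F] [NormedSpace 𝕜 F]

theorem ContinuousLinearMap.ext_pi_single {L M : (ι → 𝕜) →L[𝕜] F}
    (h : ∀ i, L (Pi.single i 1) = M (Pi.single i 1)) : L = M :=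
  ContinuousLinearMap.coe_injective <| (Pi.basisFun 𝕜 ι).ext fun i => by simpa using h i

theorem DifferentiableAt.hasDerivAt_comp_update {f : (ι → 𝕜) → F} {x : ι → 𝕜}
    (hf : DifferentiableAt 𝕜 f x) (i : ι) :
    HasDerivAt (fun t => f (Function.update x i t)) (fderiv 𝕜 f x (Pi.single i 1)) (x i) := by
  rw [← Function.update_eq_self i x] at hf
  simpa [Function.comp_def] using
    hf.hasFDerivAt.comp_hasDerivAt (x i) (hasDerivAt_update x i (x i))

theorem fderiv_div_eq_zero_of_fderiv_eq_smul {u v : E → 𝕜} {x : E}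
    (hu : DifferentiableAt 𝕜 u x) (hv : DifferentiableAt 𝕜 v x) (hvx : v x ≠ 0)
    (h : fderiv 𝕜 u x = (u x / v x) • fderiv 𝕜 v x) :
    fderiv 𝕜 (fun y => u y / v y) x = 0 := by
  have hw : DifferentiableAt 𝕜 (fun y => u y / v y) x := by fun_prop (disch := exact hvx)
  have hprod : u =ᶠ[𝓝 x] fun y => u y / v y * v y :=
    (hv.continuousAt.eventually_ne hvx).mono fun y hy => (div_mul_cancel₀ _ hy).symm
  have := hprod.fderiv_eq (𝕜 := 𝕜)
  rw [fderiv_fun_mul hw hv, h, left_eq_add] at this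
  exact (smul_eq_zero_iff_right hvx).1 this

end Calculus

theorem confPDeriv_eq {α : ℝ} {n : ℕ} {f : (Fin n → ℝ) → ℝ} {x : Fin n → ℝ}
    (hf : DifferentiableAt ℝ f x) (k : Fin n) :
    confPDeriv α f k x = x k ^ (1 - α) * fderiv ℝ f x (Pi.single k 1) := by
  rw [confPDeriv, (hf.hasDerivAt_comp_update k).deriv]

theorem confPDeriv_eq_mul_of_piconeL_eq_zero {α : ℝ} {n : ℕ} {p : Fin n → ℝ}
    (hp : ∀ k, 1 < p k) {u v : (Fin n → ℝ) → ℝ} {x : Fin n → ℝ} (hw : 0 ≤ u x / v x)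
    (h : piconeL α p u v x = 0) (k : Fin n) :
    confPDeriv α u k x = u x / v x * confPDeriv α v k x := by
  have hsum :
      ∑ k, piconeTerm (p k) (u x / v x) (confPDeriv α u k x) (confPDeriv α v k x) = 0 := by
    simpa only [piconeL, piconeTerm, Finset.sum_sub_distrib, Finset.sum_add_distrib] using h
  rw [Finset.sum_eq_zero_iff_of_nonneg fun k _ => piconeTerm_nonneg (hp k) hw] at hsum
  exact eq_mul_of_piconeTerm_eq_zero (hp k) hw (hsum k (Finset.mem_univ k))

theorem fderiv_eq_smul_of_piconeL_eq_zero {α : ℝ} {n : ℕ} {p : Fin n → ℝ}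
    (hp : ∀ k, 1 < p k) {u v : (Fin n → ℝ) → ℝ} {x : Fin n → ℝ} (hx : ∀ k, 0 < x k)
    (hu : DifferentiableAt ℝ u x) (hv : DifferentiableAt ℝ v x) (hw : 0 ≤ u x / v x)
    (h : piconeL α p u v x = 0) :
    fderiv ℝ u x = (u x / v x) • fderiv ℝ v x := by
  refine ContinuousLinearMap.ext_pi_single fun k =>
    mul_left_cancel₀ (rpow_pos_of_pos (hx k) (1 - α)).ne' ?_
  have := confPDeriv_eq_mul_of_piconeL_eq_zero hp hw h k
  rw [confPDeriv_eq hu, confPDeriv_eq hv] at this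
  rw [this, smul_apply, smul_eq_mul]
  ring

theorem anisotropic_conformable_picone_eq_case_general (α : ℝ)
    (n : ℕ) (Ω : Set (Fin n → ℝ)) (hΩ : IsOpen Ω) (hconn : IsConnected Ω)
    (hΩpos : Ω ⊆ {x : Fin n → ℝ | ∀ k, 0 < x k})
    (p : Fin n → ℝ) (hp : ∀ k, 1 < p k)
    (u v : (Fin n → ℝ) → ℝ)
    (hu : ContDiffOn ℝ 1 u Ω) (hv : ContDiffOn ℝ 1 v Ω)
    (hu0 : ∀ x ∈ Ω, 0 ≤ u x) (hv0 : ∀ x ∈ Ω, 0 < v x)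
    (hL : ∀ x ∈ Ω, piconeL α p u v x = 0) :
    ∃ c : ℝ, 0 ≤ c ∧ ∀ x ∈ Ω, u x = c * v x := by
  have hud := hu.differentiableOn one_ne_zero
  have hvd := hv.differentiableOn one_ne_zero
  have hv0' : ∀ x ∈ Ω, v x ≠ 0 := fun x hx => (hv0 x hx).ne'
  have hw0 : ∀ x ∈ Ω, 0 ≤ u x / v x := fun x hx => div_nonneg (hu0 x hx) (hv0 x hx).le
  have hwd : Set.EqOn (fderiv ℝ fun y => u y / v y) 0 Ω := fun x hx => by
    have hux := hud.differentiableAt (hΩ.mem_nhds hx)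
    have hvx := hvd.differentiableAt (hΩ.mem_nhds hx)
    exact fderiv_div_eq_zero_of_fderiv_eq_smul hux hvx (hv0' x hx) <|
      fderiv_eq_smul_of_piconeL_eq_zero hp (hΩpos hx) hux hvx (hw0 x hx) (hL x hx)
  obtain ⟨c, hc⟩ := hΩ.exists_is_const_of_fderiv_eq_zero hconn.isPreconnected
    (by simpa only [div_eq_mul_inv] using hud.fun_mul (hvd.fun_inv hv0')) hwd
  obtain ⟨x₀, hx₀⟩ := hconn.nonempty
  refine ⟨c, hc x₀ hx₀ ▸ hw0 x₀ hx₀, fun x hx => ?_⟩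
  rw [← hc x hx, div_mul_cancel₀ _ (hv0' x hx)]

/-- Equality case of the anisotropic conformable Picone identity:
if `L(u,v) = 0` on a connected open set `Ω`, then `u = c·v` for a constant `c ≥ 0`. -/
theorem anisotropic_conformable_picone_eq_case (α : ℝ) (hα : α ∈ Set.Ioc (0 : ℝ) 1)
    (n : ℕ) (Ω : Set (Fin n → ℝ)) (hΩ : IsOpen Ω) (hconn : IsConnected Ω)
    (hΩpos : Ω ⊆ {x : Fin n → ℝ | ∀ k, 0 < x k})
    (p : Fin n → ℝ) (hp : ∀ k, 1 < p k)
    (u v : (Fin n → ℝ) → ℝ)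
    (hu : ContDiffOn ℝ 1 u Ω) (hv : ContDiffOn ℝ 1 v Ω)
    (hu0 : ∀ x ∈ Ω, 0 ≤ u x) (hv0 : ∀ x ∈ Ω, 0 < v x)
    (hL : ∀ x ∈ Ω, piconeL α p u v x = 0) :
    ∃ c : ℝ, 0 ≤ c ∧ ∀ x ∈ Ω, u x = c * v x :=
  anisotropic_conformable_picone_eq_case_general α n Ω hΩ hconn hΩpos p hp u v hu hv hu0 hv0 hL
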